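/- Let G be an (n,k,d)-graph with n ≥ 2, let uv ∈ E(G), and suppose S' ⊆ V(G) with |S'| = n−2, M' is a k-matching of (G−uv)−S' with vertex set S'' that cannot be extended to a defect-d matching of (G−uv)−S', and S₁ ⊆ V(G)−S'−S''−{u,v} satisfies o((G−uv)−S'−S''−S₁) ≥ |S₁|+d+1. Then o((G−uv)−S'−S''−S₁) = |S₁|+d+2 and o(G−S'−S''−S₁) = |S₁|+d; in particular, uv is a bridge of an even component of G−S'−S''−S₁. -/

import Mathlib

open SimpleGraph

/-- `M` is a `k`-matching in its ambient graph `H`: a matching consisting of exactly `k`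
edges, i.e. covering exactly `2 * k` vertices. -/
def IsKMatching {W : Type*} {H : SimpleGraph W} (M : H.Subgraph) (k : ℕ) : Prop :=
  M.IsMatching ∧ M.verts.ncard = 2 * k

/-- `M` is a defect-`d` matching in its ambient graph `H` on the vertex type `W`:
a matching covering exactly `|W| - d` vertices. -/
def IsDefectMatching {W : Type*} {H : SimpleGraph W} (M : H.Subgraph) (d : ℕ) : Prop :=
  M.IsMatching ∧ M.verts.ncard = Nat.card W - d

/-- `G` is an `(n,k,d)`-graph: `|V(G)| ≥ n + 2k + d + 2`, `|V(G)| - n - d` is even, and for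
every set `S` of `n` vertices the graph `G - S` contains a `k`-matching, and every
`k`-matching of `G - S` extends to a defect-`d` matching of `G - S`. -/
def IsNkdGraph {V : Type*} [Fintype V] (G : SimpleGraph V) (n k d : ℕ) : Prop :=
  n + 2 * k + d + 2 ≤ Nat.card V ∧
  Even (Nat.card V - n - d) ∧
  ∀ S : Finset V, S.card = n →
    (∃ M : (G.induce ((S : Set V)ᶜ)).Subgraph, IsKMatching M k) ∧
    ∀ M : (G.induce ((S : Set V)ᶜ)).Subgraph, IsKMatching M k →
      ∃ M' : (G.induce ((S : Set V)ᶜ)).Subgraph, M ≤ M' ∧ IsDefectMatching M' d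

/-- The number of odd components of `H`, i.e. connected components with an odd number
of vertices. -/
noncomputable def oddComponentsCard {W : Type*} (H : SimpleGraph W) : ℕ :=
  Nat.card {c : H.ConnectedComponent // Odd (Nat.card c.supp)}

/-- The subgraph of `H` induced on the set `s` is factor-critical: deleting any one vertex of
`s` leaves a graph with a perfect matching. -/
def IsFactorCriticalOn {W : Type*} (H : SimpleGraph W) (s : Set W) : Prop :=
  ∀ w ∈ s, ∃ M : (H.induce (s \ {w})).Subgraph, M.IsPerfectMatching

/-- The graph `G + x` obtained from `G` by adding one new vertex (`none`) joined to every
vertex of `G`. -/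
def addUniversalVertex {V : Type*} (G : SimpleGraph V) : SimpleGraph (Option V) :=
  SimpleGraph.fromRel (fun a b =>
    (∃ u v, a = some u ∧ b = some v ∧ G.Adj u v) ∨ a = none)

/-!
Write `W` for the complement of `S' ∪ S'' ∪ S₁` and `K = (G - uv)[W]`.

An `(n,k,d)`-graph also extends every `k`-matching `N` of `G - S'` with `|S'| = n - 2`: some edge
`ab` avoids `S' ∪ V(N)` (otherwise extending `N` in `G - S' - a - b` would leave all other
vertices outside `S' ∪ V(N)` uncovered, too many of them), so extend in `G - S' - a - b` and add
`ab`. If `u` or `v` lay in `S' ∪ S''`, such an extension of `M'` could not contain `uv`, so it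
would extend `M'` in `G - uv - S'`; hence `u, v ∈ W`.

Extend `M'` to a defect-`d` matching of `G - S' - u - v`. Since `S''` is closed under it, every
odd component of `K` missing `u` and `v` contains an uncovered vertex or is matched into `S₁`
(Tutte's argument), so there are at most `|S₁| + d` of them. As `o(K) ≥ |S₁| + d + 1` and
`o(K) ≡ |W| ≡ |S₁| + d (mod 2)`, the components of `u` and `v` in `K` are distinct and odd and
`o(K) = |S₁| + d + 2`. Adding `uv` back merges them into one even component with bridge `uv`.
-/

lemma Set.ncard_compl_union_add_ncard_add_ncard {α : Type*} [Finite α] {s t : Set α}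
    (h : Disjoint s t) : (s ∪ t)ᶜ.ncard + s.ncard + t.ncard = Nat.card α := by
  rw [add_assoc, ← Set.ncard_union_eq h, add_comm, Set.ncard_add_ncard_compl]

lemma Set.ncard_eq_add_two_of_ncard_sdiff_pair_le {α : Type*} {P : Set α} (hP : P.Finite)
    {a b : α} {m : ℕ} (hle : (P \ {a, b}).ncard ≤ m) (hlt : m + 1 ≤ P.ncard)
    (hpar : P.ncard % 2 = m % 2) : P.ncard = m + 2 ∧ a ∈ P ∧ b ∈ P ∧ a ≠ b := by
  have hsplit := Set.ncard_inter_add_ncard_sdiff_eq_ncard P {a, b} hP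
  have hpair : (P ∩ {a, b}).ncard ≤ 2 :=
    (Set.ncard_le_ncard Set.inter_subset_right).trans ((Set.ncard_insert_le a {b}).trans (by simp))
  refine ⟨by omega, ?_⟩
  by_contra! h
  have hsub : ∃ c, P ∩ {a, b} ⊆ {c} := by
    by_cases ha : a ∈ P
    · by_cases hb : b ∈ P
      · exact ⟨a, by rintro z ⟨-, rfl | rfl⟩ <;> simp [h ha hb]⟩
      · exact ⟨a, by rintro z ⟨hz, rfl | rfl⟩ <;> simp_all⟩
    · exact ⟨b, by rintro z ⟨hz, rfl | rfl⟩ <;> simp_all⟩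
  obtain ⟨c, hc⟩ := hsub
  have := (Set.ncard_le_ncard hc).trans (Set.ncard_singleton c).le
  omega

namespace SimpleGraph

variable {V : Type*}

lemma oddComponentsCard_eq_ncard_oddComponents (H : SimpleGraph V) :
    oddComponentsCard H = H.oddComponents.ncard := by
  simp only [oddComponentsCard, ← Nat.card_coe_set_eq]
  rfl

abbrev Hom.induceOfLE {H G : SimpleGraph V} (hHG : H ≤ G) (s : Set V) : H.induce s →g G :=
  (Hom.ofLE hHG).comp (Embedding.induce s).toHom

lemma Hom.induceOfLE_injective {H G : SimpleGraph V} (hHG : H ≤ G) (s : Set V) :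
    Function.Injective (Hom.induceOfLE hHG s) :=
  Subtype.val_injective

lemma Hom.range_induceOfLE {H G : SimpleGraph V} (hHG : H ≤ G) (s : Set V) :
    Set.range (Hom.induceOfLE hHG s) = s :=
  Subtype.range_coe

namespace Subgraph

variable {G : SimpleGraph V} {M N : G.Subgraph}

lemma IsMatching.adj_of_le (hM : M.IsMatching) (hN : N.IsMatching) (hMN : M ≤ N) {x y : V}
    (hx : x ∈ M.verts) (hxy : N.Adj x y) : M.Adj x y := by
  obtain ⟨z, hz, -⟩ := hM hx
  rwa [hN.eq_of_adj_left hxy (hMN.2 hz)]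

lemma IsMatching.even_ncard_of_forall_adj_mem [Finite V] (hM : M.IsMatching) {Q : Set V}
    (hQ : Q ⊆ M.verts) (hclosed : ∀ x ∈ Q, ∀ y, M.Adj x y → y ∈ Q) : Even Q.ncard := by
  have hind : (M.induce Q).IsMatching := by
    intro x hx
    obtain ⟨y, hy, hyu⟩ := hM (hQ hx)
    exact ⟨y, ⟨hx, hclosed x hx y hy, hy⟩, fun z hz => hyu z hz.2.2⟩
  have := Fintype.ofFinite (M.induce Q).verts
  simpa [Set.ncard_eq_toFinset_card'] using hind.even_card

lemma IsMatching.exists_notMem_verts_or_adj_notMem [Finite V] (hM : M.IsMatching) {C : Set V}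
    (hC : Odd C.ncard) : ∃ z, (z ∈ C ∧ z ∉ M.verts) ∨ (z ∉ C ∧ ∃ x ∈ C, M.Adj x z) := by
  by_contra! h
  refine Nat.not_even_iff_odd.mpr hC (hM.even_ncard_of_forall_adj_mem (fun z hz => (h z).1 hz) ?_)
  exact fun x hx y hxy => by_contra fun hy => (h y).2 hy x hx hxy

section Comap

variable {W : Type*} {G' : SimpleGraph W} {f : G' →g G}

lemma IsMatching.comap (hN : N.IsMatching) (hf : Function.Injective f)
    (hv : N.verts ⊆ Set.range f) (ha : ∀ a b, N.Adj (f a) (f b) → G'.Adj a b) :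
    (N.comap f).IsMatching := by
  intro a ha'
  obtain ⟨y, hy, hyu⟩ := hN ha'
  obtain ⟨b, rfl⟩ := hv (N.edge_vert hy.symm)
  exact ⟨b, ⟨ha a b hy, hy⟩, fun b' hb' => hf (hyu _ hb'.2)⟩

lemma le_map_comap (hv : N.verts ⊆ Set.range f) (ha : ∀ a b, N.Adj (f a) (f b) → G'.Adj a b) :
    N ≤ (N.comap f).map f := by
  constructor
  · intro x hx
    obtain ⟨a, rfl⟩ := hv hx
    exact ⟨a, hx, rfl⟩
  · intro x y hxy
    obtain ⟨a, rfl⟩ := hv (N.edge_vert hxy)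
    obtain ⟨b, rfl⟩ := hv (N.edge_vert hxy.symm)
    exact ⟨a, b, ⟨ha a b hxy, hxy⟩, rfl, rfl⟩

end Comap

/-- The `G`-level form of a defect-`d` matching of `G[T]`. -/
def IsDefectMatchingOn (N : G.Subgraph) (T : Set V) (d : ℕ) : Prop :=
  N.IsMatching ∧ N.verts ⊆ T ∧ (T \ N.verts).ncard = d

lemma IsDefectMatchingOn.sup_subgraphOfAdj {T : Set V} {d : ℕ} {a b : V} (hab : G.Adj a b)
    (ha : a ∈ T) (hb : b ∈ T) (hN : N.IsDefectMatchingOn (T \ {a, b}) d) :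
    (N ⊔ G.subgraphOfAdj hab).IsDefectMatchingOn T d := by
  obtain ⟨hN, hNT, hNd⟩ := hN
  have hdisj : Disjoint N.verts (G.subgraphOfAdj hab).verts := by
    rw [subgraphOfAdj_verts]
    exact Set.disjoint_of_subset_left hNT Set.disjoint_sdiff_left
  refine ⟨hN.sup (.subgraphOfAdj hab) ?_, ?_, ?_⟩
  · rwa [hN.support_eq_verts, (IsMatching.subgraphOfAdj hab).support_eq_verts]
  · rintro x (hx | hx)
    · exact (hNT hx).1
    · rcases hx with rfl | rfl <;> assumption
  · rw [← hNd, verts_sup, subgraphOfAdj_verts, Set.sdiff_sdiff, Set.union_comm]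

lemma IsDefectMatchingOn.ncard_verts [Finite V] {T : Set V} {d : ℕ}
    (hN : N.IsDefectMatchingOn T d) : N.verts.ncard = T.ncard - d := by
  obtain ⟨-, hNT, rfl⟩ := hN
  have := Set.ncard_le_ncard hNT
  rw [Set.ncard_sdiff hNT]
  omega

end Subgraph

lemma Subgraph.IsMatching.exists_unmatched_or_adj_mem_of_odd [Finite V] {G H : SimpleGraph V}
    {M : G.Subgraph} (hM : M.IsMatching) {t A : Set V} {c : (H.induce t).ConnectedComponent}
    (hc : Odd c.supp.ncard)
    (hout : ∀ x ∈ c.supp, ∀ y, M.Adj x y → y ∈ A ∨ ∃ hy : y ∈ t, ⟨y, hy⟩ ∈ c.supp) :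
    ∃ z, (∃ x ∈ c.supp, (x : V) = z ∧ z ∉ M.verts) ∨ (z ∈ A ∧ ∃ x ∈ c.supp, M.Adj x z) := by
  have hC : Odd (Subtype.val '' c.supp).ncard := by
    rwa [Set.ncard_image_of_injective _ Subtype.val_injective]
  obtain ⟨z, ⟨⟨x, hx, rfl⟩, hz⟩ | ⟨hz, _, ⟨x, hx, rfl⟩, hxz⟩⟩ :=
    hM.exists_notMem_verts_or_adj_notMem hC
  · exact ⟨x, .inl ⟨x, hx, rfl, hz⟩⟩
  · refine ⟨z, .inr ⟨?_, x, hx, hxz⟩⟩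
    rcases hout x hx z hxz with h | ⟨hy, hyc⟩
    · exact h
    · exact absurd ⟨⟨z, hy⟩, hyc, rfl⟩ hz

theorem Subgraph.IsMatching.ncard_le_ncard_sdiff_verts_add_ncard [Finite V]
    {G H : SimpleGraph V} {M : G.Subgraph} (hM : M.IsMatching) {s t A : Set V}
    {P : Set (H.induce t).ConnectedComponent} (hodd : P ⊆ (H.induce t).oddComponents)
    (hs : ∀ c ∈ P, ∀ x ∈ c.supp, (x : V) ∈ s) (hA : Disjoint A t)
    (hout : ∀ c ∈ P, ∀ x ∈ c.supp, ∀ y, M.Adj x y → y ∈ A ∨ ∃ hy : y ∈ t, ⟨y, hy⟩ ∈ c.supp) :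
    P.ncard ≤ (s \ M.verts).ncard + A.ncard := by
  rcases P.eq_empty_or_nonempty with rfl | ⟨c, -⟩
  · simp
  have : Nonempty V := ⟨c.exists_rep.choose⟩
  choose! g hg using fun c hc => hM.exists_unmatched_or_adj_mem_of_odd (hodd hc) (hout c hc)
  have hmaps : ∀ c ∈ P, g c ∈ (s \ M.verts) ∪ A := by
    intro c hc
    rcases hg c hc with ⟨x, hx, hxz, hz⟩ | ⟨hz, -⟩
    · exact .inl ⟨hxz ▸ hs c hc x hx, hz⟩
    · exact .inr hz
  have hinj : Set.InjOn g P := by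
    intro c₁ hc₁ c₂ hc₂ hg₁₂
    rcases hg c₁ hc₁ with ⟨x₁, hx₁, hxz₁, -⟩ | ⟨hz₁, x₁, hx₁, hxz₁⟩ <;>
      rcases hg c₂ hc₂ with ⟨x₂, hx₂, hxz₂, -⟩ | ⟨hz₂, x₂, hx₂, hxz₂⟩
    · obtain rfl : x₁ = x₂ := Subtype.ext (hxz₁.trans (hg₁₂.trans hxz₂.symm))
      exact ConnectedComponent.eq_of_common_vertex hx₁ hx₂
    · exact absurd x₁.2 (Set.disjoint_left.mp hA (hxz₁ ▸ hg₁₂ ▸ hz₂))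
    · exact absurd x₂.2 (Set.disjoint_left.mp hA (hxz₂ ▸ hg₁₂ ▸ hz₁))
    · obtain rfl : x₁ = x₂ := Subtype.ext (hM.eq_of_adj_right hxz₁ (hg₁₂ ▸ hxz₂))
      exact ConnectedComponent.eq_of_common_vertex hx₁ hx₂
  calc P.ncard ≤ ((s \ M.verts) ∪ A).ncard := Set.ncard_le_ncard_of_injOn g hmaps hinj
    _ ≤ (s \ M.verts).ncard + A.ncard := Set.ncard_union_le _ _

section SupEdge

variable {K : SimpleGraph V} {x y : V}

lemma reachable_sup_edge_iff {a b : V} :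
    (K ⊔ edge x y).Reachable a b ↔ K.Reachable a b ∨ (K.Reachable a x ∧ K.Reachable y b) ∨
      (K.Reachable a y ∧ K.Reachable x b) := by
  constructor
  · rintro ⟨w⟩
    induction w with
    | nil => exact .inl .rfl
    | @cons a c b hac _ ih =>
      rcases (sup_adj _ _ _ _).mp hac with hac | hac
      · have h := hac.reachable
        rcases ih with h' | ⟨h₁, h₂⟩ | ⟨h₁, h₂⟩
        · exact .inl (h.trans h')
        · exact .inr (.inl ⟨h.trans h₁, h₂⟩)
        · exact .inr (.inr ⟨h.trans h₁, h₂⟩)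
      obtain ⟨⟨rfl, rfl⟩ | ⟨rfl, rfl⟩, -⟩ := (edge_adj _ _ _ _).mp hac
      · rcases ih with h' | ⟨h₁, h₂⟩ | ⟨-, h₂⟩
        · exact .inr (.inl ⟨.rfl, h'⟩)
        · exact .inl (h₁.symm.trans h₂)
        · exact .inl h₂
      · rcases ih with h' | ⟨-, h₂⟩ | ⟨h₁, h₂⟩
        · exact .inr (.inr ⟨.rfl, h'⟩)
        · exact .inl h₂
        · exact .inl (h₁.symm.trans h₂)
  · have hL : K ≤ K ⊔ edge x y := le_sup_left
    by_cases hxy : x = y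
    · subst hxy
      rintro (h | ⟨h₁, h₂⟩ | ⟨h₁, h₂⟩) <;> [exact h.mono hL; skip; skip] <;>
        exact (h₁.trans h₂).mono hL
    have hadj : (K ⊔ edge x y).Adj x y := (sup_adj _ _ _ _).mpr (.inr (by simp [edge_adj, hxy]))
    rintro (h | ⟨h₁, h₂⟩ | ⟨h₁, h₂⟩)
    · exact h.mono hL
    · exact (h₁.mono hL).trans (hadj.reachable.trans (h₂.mono hL))
    · exact (h₁.mono hL).trans (hadj.symm.reachable.trans (h₂.mono hL))

lemma supp_connectedComponentMk_sup_edge :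
    ((K ⊔ edge x y).connectedComponentMk x).supp =
      (K.connectedComponentMk x).supp ∪ (K.connectedComponentMk y).supp := by
  ext z
  have := Reachable.refl (G := K) x
  simp only [ConnectedComponent.mem_supp_iff, ConnectedComponent.eq, Set.mem_union,
    reachable_sup_edge_iff]
  tauto

lemma supp_map_sup_edge {c : K.ConnectedComponent} (hx : x ∉ c.supp) (hy : y ∉ c.supp) :
    (c.map (Hom.ofLE (le_sup_left : K ≤ K ⊔ edge x y))).supp = c.supp := by
  induction c using ConnectedComponent.ind with | h a => ?_
  ext z
  simp only [ConnectedComponent.map_mk, Hom.ofLE_apply, ConnectedComponent.mem_supp_iff,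
    ConnectedComponent.eq, reachable_sup_edge_iff] at hx hy ⊢
  tauto

variable [Finite V]

lemma even_ncard_supp_connectedComponentMk_sup_edge
    (hx : K.connectedComponentMk x ∈ K.oddComponents)
    (hy : K.connectedComponentMk y ∈ K.oddComponents)
    (hxy : K.connectedComponentMk x ≠ K.connectedComponentMk y) :
    Even ((K ⊔ edge x y).connectedComponentMk x).supp.ncard := by
  rw [supp_connectedComponentMk_sup_edge,
    Set.ncard_union_eq (K.pairwise_disjoint_supp_connectedComponent hxy)]
  exact Odd.add_odd hx hy

lemma ncard_oddComponents_sup_edge (hx : K.connectedComponentMk x ∈ K.oddComponents)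
    (hy : K.connectedComponentMk y ∈ K.oddComponents)
    (hxy : K.connectedComponentMk x ≠ K.connectedComponentMk y) :
    (K ⊔ edge x y).oddComponents.ncard + 2 = K.oddComponents.ncard := by
  set φ := ConnectedComponent.map (Hom.ofLE (le_sup_left : K ≤ K ⊔ edge x y))
  set E : Set K.ConnectedComponent := {K.connectedComponentMk x, K.connectedComponentMk y}
  have hsupp : ∀ c ∉ E, (φ c).supp = c.supp := by
    intro c hc
    simp only [E, Set.mem_insert_iff, Set.mem_singleton_iff, not_or] at hc
    exact supp_map_sup_edge (fun h => hc.1 ((c.mem_supp_iff x).mp h).symm)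
      (fun h => hc.2 ((c.mem_supp_iff y).mp h).symm)
  have hφE : ∀ c ∈ E, φ c ∉ (K ⊔ edge x y).oddComponents := by
    have hφy : φ (K.connectedComponentMk y) = φ (K.connectedComponentMk x) :=
      ConnectedComponent.eq.mpr (reachable_sup_edge_iff.mpr (.inr (.inr ⟨.rfl, .rfl⟩)))
    rintro c (rfl | rfl) <;> [skip; rw [hφy]] <;>
      exact Nat.not_odd_iff_even.mpr (even_ncard_supp_connectedComponentMk_sup_edge hx hy hxy)
  have himage : φ '' (K.oddComponents \ E) = (K ⊔ edge x y).oddComponents := by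
    ext c'
    constructor
    · rintro ⟨c, ⟨hodd, hc⟩, rfl⟩
      change Odd (φ c).supp.ncard
      rwa [hsupp c hc]
    · induction c' using ConnectedComponent.ind with | h a => ?_
      intro hodd
      have hc : K.connectedComponentMk a ∉ E := fun hc => hφE _ hc hodd
      refine ⟨K.connectedComponentMk a, ⟨?_, hc⟩, rfl⟩
      change Odd (φ (K.connectedComponentMk a)).supp.ncard at hodd
      rwa [hsupp _ hc] at hodd
  have hinj : Set.InjOn φ (K.oddComponents \ E) := fun c₁ h₁ c₂ h₂ h =>
    ConnectedComponent.supp_injective (by rw [← hsupp c₁ h₁.2, ← hsupp c₂ h₂.2, h])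
  have hE : E ⊆ K.oddComponents := by rintro c (rfl | rfl) <;> assumption
  have hE2 : E.ncard = 2 := Set.ncard_pair hxy
  have := Set.ncard_le_ncard hE
  rw [← himage, hinj.ncard_image, Set.ncard_sdiff hE]
  omega

end SupEdge

lemma induce_eq_induce_deleteEdges_sup_edge {G : SimpleGraph V} {W : Set V} {u v : V}
    (huv : G.Adj u v) (hu : u ∈ W) (hv : v ∈ W) :
    G.induce W = (G.deleteEdges {s(u, v)}).induce W ⊔ edge ⟨u, hu⟩ ⟨v, hv⟩ := by
  ext a b
  simp only [sup_adj, comap_adj, Function.Embedding.coe_subtype, deleteEdges_adj,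
    Set.mem_singleton_iff, Sym2.eq_iff, edge_adj, Subtype.ext_iff]
  constructor
  · intro hab
    by_cases h : (a : V) = u ∧ (b : V) = v ∨ (a : V) = v ∧ (b : V) = u
    · exact .inr ⟨h, fun hab' => G.ne_of_adj hab (congrArg Subtype.val hab')⟩
    · exact .inl ⟨hab, h⟩
  · rintro (⟨hab, -⟩ | ⟨⟨ha, hb⟩ | ⟨ha, hb⟩, -⟩)
    · exact hab
    · rwa [ha, hb]
    · rw [ha, hb]
      exact huv.symm

end SimpleGraph

lemma IsKMatching.map_induceOfLE {V : Type*} {H G : SimpleGraph V} (hHG : H ≤ G) {s : Set V}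
    {M : (H.induce s).Subgraph} {k : ℕ} (hM : IsKMatching M k) :
    (M.map (Hom.induceOfLE hHG s)).IsMatching ∧
      (M.map (Hom.induceOfLE hHG s)).verts.ncard = 2 * k ∧
      (M.map (Hom.induceOfLE hHG s)).verts ⊆ s :=
  ⟨hM.1.map _ (Hom.induceOfLE_injective hHG s),
    (Set.ncard_image_of_injective _ (Hom.induceOfLE_injective hHG s)).trans hM.2,
    by rintro _ ⟨x, -, rfl⟩; exact x.2⟩

namespace IsNkdGraph

variable {V : Type*} [Fintype V] {G : SimpleGraph V} {n k d : ℕ}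

theorem exists_extension (hG : IsNkdGraph G n k d) {S : Finset V} (hS : S.card = n)
    {N : G.Subgraph} (hN : N.IsMatching) (hNk : N.verts.ncard = 2 * k)
    (hNS : N.verts ⊆ (↑S)ᶜ) : ∃ N' : G.Subgraph, N ≤ N' ∧ N'.IsDefectMatchingOn (↑S)ᶜ d := by
  set f := Hom.induceOfLE (le_refl G) ((S : Set V)ᶜ)
  have hf : Function.Injective f := Hom.induceOfLE_injective (le_refl G) _
  have hv : N.verts ⊆ Set.range f := by rwa [Hom.range_induceOfLE]
  have ha : ∀ a b, N.Adj (f a) (f b) → (G.induce (↑S)ᶜ).Adj a b := fun _ _ h => N.adj_sub h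
  obtain ⟨M, hNM, hM, hMd⟩ := (hG.2.2 S hS).2 (N.comap f)
    ⟨hN.comap hf hv ha, by
      rwa [Subgraph.comap_verts, Set.ncard_preimage_of_injective_subset_range hf hv]⟩
  have hMS : (M.map f).verts ⊆ (↑S)ᶜ := by rintro _ ⟨x, -, rfl⟩; exact x.2
  refine ⟨M.map f, (Subgraph.le_map_comap hv ha).trans (Subgraph.map_mono hNM),
    hM.map f hf, hMS, ?_⟩
  have hcompl := Set.ncard_add_ncard_compl (S : Set V)
  have := hG.1
  rw [Set.ncard_sdiff hMS, Subgraph.map_verts, Set.ncard_image_of_injective _ hf, hMd,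
    Nat.card_coe_set_eq]
  rw [Set.ncard_coe_finset] at hcompl
  omega

theorem exists_extension_sdiff_pair (hG : IsNkdGraph G n k d) (hn : 2 ≤ n) {S : Finset V}
    (hS : S.card = n - 2) {N : G.Subgraph} (hN : N.IsMatching) (hNk : N.verts.ncard = 2 * k)
    (hNS : N.verts ⊆ (↑S)ᶜ) {a b : V} (hab : a ≠ b) (ha : a ∉ ↑S ∪ N.verts)
    (hb : b ∉ ↑S ∪ N.verts) :
    ∃ N' : G.Subgraph, N ≤ N' ∧ N'.IsDefectMatchingOn ((↑S)ᶜ \ {a, b}) d := by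
  classical
  simp only [Set.mem_union, Finset.mem_coe, not_or] at ha hb
  have hcard : (insert a (insert b S)).card = n := by
    rw [Finset.card_insert_of_notMem (by simp [hab, ha.1]), Finset.card_insert_of_notMem hb.1]
    omega
  have hcompl : ((insert a (insert b S) : Finset V) : Set V)ᶜ = (↑S)ᶜ \ {a, b} := by
    ext
    simp only [Finset.coe_insert, Set.mem_compl_iff, Set.mem_insert_iff, Set.mem_sdiff,
      Set.mem_singleton_iff]
    tauto
  rw [← hcompl]
  refine hG.exists_extension hcard hN hNk ?_
  rw [hcompl]
  exact fun x hx => ⟨hNS hx, by rintro (rfl | rfl) <;> tauto⟩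

theorem exists_adj_of_card_eq_sub_two (hG : IsNkdGraph G n k d) (hn : 2 ≤ n) {S : Finset V}
    (hS : S.card = n - 2) {N : G.Subgraph} (hN : N.IsMatching) (hNk : N.verts.ncard = 2 * k)
    (hNS : N.verts ⊆ (↑S)ᶜ) : ∃ a ∉ ↑S ∪ N.verts, ∃ b ∉ ↑S ∪ N.verts, G.Adj a b := by
  set I := ((S : Set V) ∪ N.verts)ᶜ
  have hI : I.ncard + (n - 2) + 2 * k = Nat.card V := by
    rw [← hS, ← hNk, ← Set.ncard_coe_finset]
    exact Set.ncard_compl_union_add_ncard_add_ncard (Set.subset_compl_iff_disjoint_left.mp hNS)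
  have := hG.1
  obtain ⟨a, b, ha, hb, hab⟩ := (Set.one_lt_ncard_iff (Set.toFinite I)).mp (by omega)
  obtain ⟨N', hNN', hN', hN'S, hN'd⟩ := hG.exists_extension_sdiff_pair hn hS hN hNk hNS hab ha hb
  by_contra! hnoadj
  -- A vertex of `I` covered by `N'` would have its partner in `I`, because `N` is closed in `N'`.
  have hsub : I \ {a, b} ⊆ ((↑S)ᶜ \ {a, b}) \ N'.verts := by
    rintro x ⟨hxI, hxab⟩
    refine ⟨⟨fun h => hxI (.inl h), hxab⟩, fun hx => ?_⟩
    obtain ⟨y, hxy, -⟩ := hN' hx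
    refine hnoadj x hxI y (fun hy => ?_) (N'.adj_sub hxy)
    rcases hy with hyS | hyN
    · exact (hN'S (N'.edge_vert hxy.symm)).1 hyS
    · exact hxI (.inr (N.edge_vert (hN.adj_of_le hN' hNN' hyN hxy.symm).symm))
  have hab2 : ({a, b} : Set V) ⊆ I := by rintro _ (rfl | rfl) <;> assumption
  have := Set.ncard_le_ncard hsub
  rw [Set.ncard_sdiff hab2, Set.ncard_pair hab] at this
  omega

theorem exists_extension_of_card_eq_sub_two (hG : IsNkdGraph G n k d) (hn : 2 ≤ n)
    {S : Finset V} (hS : S.card = n - 2) {N : G.Subgraph} (hN : N.IsMatching)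
    (hNk : N.verts.ncard = 2 * k) (hNS : N.verts ⊆ (↑S)ᶜ) :
    ∃ N' : G.Subgraph, N ≤ N' ∧ N'.IsDefectMatchingOn (↑S)ᶜ d := by
  obtain ⟨a, ha, b, hb, hab⟩ := hG.exists_adj_of_card_eq_sub_two hn hS hN hNk hNS
  obtain ⟨N', hNN', hN'⟩ := hG.exists_extension_sdiff_pair hn hS hN hNk hNS hab.ne ha hb
  exact ⟨N' ⊔ G.subgraphOfAdj hab, hNN'.trans le_sup_left,
    hN'.sup_subgraphOfAdj hab (fun h => ha (.inl h)) (fun h => hb (.inl h))⟩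

theorem notMem_of_not_exists_extension (hG : IsNkdGraph G n k d) (hn : 2 ≤ n) {u v : V}
    {S : Finset V} (hS : S.card = n - 2)
    {M : ((G.deleteEdges {s(u, v)}).induce (↑S)ᶜ).Subgraph} (hM : IsKMatching M k)
    (hnoext : ¬ ∃ M' : ((G.deleteEdges {s(u, v)}).induce (↑S)ᶜ).Subgraph,
      M ≤ M' ∧ IsDefectMatching M' d) :
    u ∉ ↑S ∪ Subtype.val '' M.verts ∧ v ∉ ↑S ∪ Subtype.val '' M.verts := by
  set f := Hom.induceOfLE (G.deleteEdges_le {s(u, v)}) ((S : Set V)ᶜ)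
  have hf : Function.Injective f := Hom.induceOfLE_injective _ _
  obtain ⟨hN, hNk, hNS⟩ := hM.map_induceOfLE (G.deleteEdges_le {s(u, v)})
  obtain ⟨N', hNN', hN'⟩ := hG.exists_extension_of_card_eq_sub_two hn hS hN hNk hNS
  have hblocked : ∀ w z, s(w, z) = s(u, v) → w ∈ ↑S ∪ Subtype.val '' M.verts → ¬ N'.Adj w z := by
    rintro w z he (hwS | hwM) hwz
    · exact hN'.2.1 (N'.edge_vert hwz) hwS
    · obtain ⟨a, b, hab, rfl, rfl⟩ := hN.adj_of_le hN'.1 hNN' hwM hwz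
      exact ((deleteEdges_adj ..).mp (M.adj_sub hab)).2 he
  rw [← not_or]
  intro huv
  have hnotuv : ∀ a b, N'.Adj a b → s(a, b) ≠ s(u, v) := by
    intro a b hab he
    have hab' : a ∈ ↑S ∪ Subtype.val '' M.verts ∨ b ∈ ↑S ∪ Subtype.val '' M.verts := by
      rcases Sym2.eq_iff.mp he with ⟨rfl, rfl⟩ | ⟨rfl, rfl⟩ <;> tauto
    rcases hab' with ha | hb
    · exact hblocked a b he ha hab
    · exact hblocked b a (Sym2.eq_swap.trans he) hb hab.symm
  have ha : ∀ a b, N'.Adj (f a) (f b) → ((G.deleteEdges {s(u, v)}).induce (↑S)ᶜ).Adj a b :=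
    fun a b hab => (deleteEdges_adj ..).mpr ⟨N'.adj_sub hab, hnotuv _ _ hab⟩
  have hv : N'.verts ⊆ Set.range f := by rw [Hom.range_induceOfLE]; exact hN'.2.1
  refine hnoext ⟨N'.comap f, (Subgraph.map_le_iff_le_comap _ _ _).1 hNN',
    hN'.1.comap hf hv ha, ?_⟩
  rw [Subgraph.comap_verts, Set.ncard_preimage_of_injective_subset_range hf hv,
    Nat.card_coe_set_eq, hN'.ncard_verts]

theorem ncard_oddComponents_induce_mod_two (hG : IsNkdGraph G n k d) (hn : 2 ≤ n)
    {S : Finset V} (hS : S.card = n - 2) {B : Set V} (hB : B.ncard = 2 * k)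
    (hSB : Disjoint (↑S) B) {S₁ : Finset V} (hS₁ : Disjoint (↑S₁ : Set V) (↑S ∪ B))
    (H : SimpleGraph V) :
    (H.induce (↑S ∪ B ∪ ↑S₁)ᶜ).oddComponents.ncard % 2 = (S₁.card + d) % 2 := by
  have hW := Set.ncard_compl_union_add_ncard_add_ncard hS₁.symm
  rw [Set.ncard_union_eq hSB, Set.ncard_coe_finset, Set.ncard_coe_finset, hS, hB] at hW
  have hodd := odd_ncard_oddComponents (H.induce (↑S ∪ B ∪ ↑S₁)ᶜ)
  rw [Nat.card_coe_set_eq, Nat.odd_iff, Nat.odd_iff] at hodd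
  obtain ⟨m, hm⟩ := hG.2.1
  have := hG.1
  omega

theorem ncard_oddComponents_deleteEdges_sdiff_le (hG : IsNkdGraph G n k d) (hn : 2 ≤ n)
    {u v : V} (huv : u ≠ v) {S : Finset V} (hS : S.card = n - 2)
    {M : ((G.deleteEdges {s(u, v)}).induce (↑S)ᶜ).Subgraph} (hM : IsKMatching M k)
    (S₁ : Finset V) (hu : u ∈ (↑S ∪ Subtype.val '' M.verts ∪ ↑S₁)ᶜ)
    (hv : v ∈ (↑S ∪ Subtype.val '' M.verts ∪ ↑S₁)ᶜ) :
    (((G.deleteEdges {s(u, v)}).induce (↑S ∪ Subtype.val '' M.verts ∪ ↑S₁)ᶜ).oddComponents \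
      {((G.deleteEdges {s(u, v)}).induce _).connectedComponentMk ⟨u, hu⟩,
        ((G.deleteEdges {s(u, v)}).induce _).connectedComponentMk ⟨v, hv⟩}).ncard ≤
      S₁.card + d := by
  classical
  set W := ((S : Set V) ∪ Subtype.val '' M.verts ∪ ↑S₁)ᶜ
  set K := (G.deleteEdges {s(u, v)}).induce W
  obtain ⟨hN, hNk, hNS⟩ := hM.map_induceOfLE (G.deleteEdges_le {s(u, v)})
  have hmemW : ∀ {x}, x ∈ W → x ∉ S ∧ x ∉ Subtype.val '' M.verts := fun hx =>
    ⟨fun h => hx (.inl (.inl h)), fun h => hx (.inl (.inr h))⟩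
  have hcard : (insert u (insert v S)).card = n := by
    rw [Finset.card_insert_of_notMem (by simp [huv, (hmemW hu).1]),
      Finset.card_insert_of_notMem (hmemW hv).1]
    omega
  obtain ⟨N', hNN', hN', hN'S, hN'd⟩ := hG.exists_extension hcard hN hNk (by
    intro x hx
    simp only [Finset.coe_insert, Set.mem_compl_iff, Set.mem_insert_iff, not_or]
    exact ⟨fun h => (hmemW hu).2 (h ▸ hx), fun h => (hmemW hv).2 (h ▸ hx), hNS hx⟩)
  have hoff : ∀ c ∈ K.oddComponents \ {K.connectedComponentMk ⟨u, hu⟩,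
      K.connectedComponentMk ⟨v, hv⟩}, ∀ x ∈ c.supp, (x : V) ≠ u ∧ (x : V) ≠ v := by
    rintro c ⟨-, hc⟩ x hx
    simp only [Set.mem_insert_iff, Set.mem_singleton_iff, not_or] at hc
    rw [ConnectedComponent.mem_supp_iff] at hx
    constructor <;> intro h <;> [apply hc.1; apply hc.2] <;> rw [← hx] <;> congr 1 <;>
      exact Subtype.ext h
  rw [add_comm, ← hN'd, ← Set.ncard_coe_finset S₁]
  refine hN'.ncard_le_ncard_sdiff_verts_add_ncard Set.sdiff_subset ?_
    (Set.disjoint_compl_right_iff_subset.mpr Set.subset_union_right) ?_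
  · intro c hc x hx
    simp only [Finset.coe_insert, Set.mem_compl_iff, Set.mem_insert_iff, not_or]
    exact ⟨(hoff c hc x hx).1, (hoff c hc x hx).2, (hmemW x.2).1⟩
  · intro c hc x hx y hxy
    by_cases hy₁ : y ∈ S₁
    · exact .inl hy₁
    -- `y` is not covered by `M`, since `M` is closed in `N'` and `x` is not covered by `M`.
    have hyW : y ∈ W := by
      rintro ((hyS | hyM) | hy₁')
      · exact hN'S (N'.edge_vert hxy.symm) (by simp [hyS])
      · exact (hmemW x.2).2 (hN.adj_of_le hN' hNN' hyM hxy.symm).snd_mem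
      · exact hy₁ hy₁'
    have hKxy : K.Adj x ⟨y, hyW⟩ := by
      refine (deleteEdges_adj ..).mpr ⟨N'.adj_sub hxy, fun he => ?_⟩
      rcases Sym2.eq_iff.mp (Set.mem_singleton_iff.mp he) with ⟨hxu, -⟩ | ⟨hxv, -⟩
      · exact (hoff c hc x hx).1 hxu
      · exact (hoff c hc x hx).2 hxv
    refine .inr ⟨hyW, ?_⟩
    rw [ConnectedComponent.mem_supp_iff] at hx ⊢
    rw [← hx]
    exact (ConnectedComponent.connectedComponentMk_eq_of_adj hKxy).symm

end IsNkdGraph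

theorem stmt_17 {V : Type*} [Fintype V] (G : SimpleGraph V) (n k d : ℕ)
    (hn : 2 ≤ n) (hG : IsNkdGraph G n k d) (u v : V) (huv : G.Adj u v)
    (S' : Finset V) (hS' : S'.card = n - 2)
    (M' : ((G.deleteEdges {s(u, v)}).induce ((S' : Set V)ᶜ)).Subgraph)
    (hM' : IsKMatching M' k)
    (hnoext : ¬ ∃ M'' : ((G.deleteEdges {s(u, v)}).induce ((S' : Set V)ᶜ)).Subgraph,
        M' ≤ M'' ∧ IsDefectMatching M'' d)
    (S₁ : Finset V)
    (hS₁ : (S₁ : Set V) ⊆ ((S' : Set V) ∪ (Subtype.val '' M'.verts) ∪ {u, v})ᶜ)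
    (ho : S₁.card + d + 1 ≤
        oddComponentsCard ((G.deleteEdges {s(u, v)}).induce
          (((S' : Set V) ∪ (Subtype.val '' M'.verts) ∪ (S₁ : Set V))ᶜ))) :
    oddComponentsCard ((G.deleteEdges {s(u, v)}).induce
        (((S' : Set V) ∪ (Subtype.val '' M'.verts) ∪ (S₁ : Set V))ᶜ))
      = S₁.card + d + 2 ∧
    oddComponentsCard (G.induce
        (((S' : Set V) ∪ (Subtype.val '' M'.verts) ∪ (S₁ : Set V))ᶜ))
      = S₁.card + d ∧
    -- in particular, `uv` is a bridge of an even component of `G - S' - S'' - S₁`: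
    ∃ (hu : u ∈ ((S' : Set V) ∪ (Subtype.val '' M'.verts) ∪ (S₁ : Set V))ᶜ)
      (hv : v ∈ ((S' : Set V) ∪ (Subtype.val '' M'.verts) ∪ (S₁ : Set V))ᶜ),
      (G.induce (((S' : Set V) ∪ (Subtype.val '' M'.verts) ∪ (S₁ : Set V))ᶜ)).connectedComponentMk
          ⟨u, hu⟩
        = (G.induce (((S' : Set V) ∪ (Subtype.val '' M'.verts) ∪ (S₁ : Set V))ᶜ)).connectedComponentMk
          ⟨v, hv⟩ ∧
      Even (Nat.card
        ((G.induce (((S' : Set V) ∪ (Subtype.val '' M'.verts) ∪ (S₁ : Set V))ᶜ)).connectedComponentMk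
          ⟨u, hu⟩).supp) ∧
      ¬ ((G.induce (((S' : Set V) ∪ (Subtype.val '' M'.verts) ∪ (S₁ : Set V))ᶜ)).deleteEdges
          {s(⟨u, hu⟩, ⟨v, hv⟩)}).Reachable ⟨u, hu⟩ ⟨v, hv⟩ := by
  obtain ⟨hu', hv'⟩ := hG.notMem_of_not_exists_extension hn hS' hM' hnoext
  have hS₁disj := Set.subset_compl_iff_disjoint_right.mp hS₁
  have hu : u ∉ (S' : Set V) ∪ Subtype.val '' M'.verts ∪ ↑S₁ :=
    fun h => h.elim hu' fun h => hS₁ h (.inr (.inl rfl))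
  have hv : v ∉ (S' : Set V) ∪ Subtype.val '' M'.verts ∪ ↑S₁ :=
    fun h => h.elim hv' fun h => hS₁ h (.inr (.inr rfl))
  set K := (G.deleteEdges {s(u, v)}).induce ((S' : Set V) ∪ Subtype.val '' M'.verts ∪ ↑S₁)ᶜ
  obtain ⟨-, hB, hSB⟩ := hM'.map_induceOfLE (G.deleteEdges_le {s(u, v)})
  have hpar := hG.ncard_oddComponents_induce_mod_two hn hS' hB
    (Set.subset_compl_iff_disjoint_left.mp hSB) (hS₁disj.mono_right Set.subset_union_left)
    (G.deleteEdges {s(u, v)})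
  have hle := hG.ncard_oddComponents_deleteEdges_sdiff_le hn huv.ne hS' hM' S₁ hu hv
  rw [oddComponentsCard_eq_ncard_oddComponents] at ho ⊢
  obtain ⟨hq, hcu, hcv, hne⟩ :=
    Set.ncard_eq_add_two_of_ncard_sdiff_pair_le (Set.toFinite _) hle ho hpar
  have hnr : ¬K.Reachable ⟨u, hu⟩ ⟨v, hv⟩ := fun h => hne (ConnectedComponent.eq.mpr h)
  have hmerge := ncard_oddComponents_sup_edge hcu hcv hne
  rw [oddComponentsCard_eq_ncard_oddComponents, induce_eq_induce_deleteEdges_sup_edge huv hu hv]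
  refine ⟨hq, by omega, hu, hv, ConnectedComponent.eq.mpr
    (reachable_sup_edge_iff.mpr (.inr (.inl ⟨.rfl, .rfl⟩))), ?_,
    isBridge_iff.mp (isBridge_sup_edge.mpr (.of_not_reachable hnr))⟩
  rw [Nat.card_coe_set_eq]
  exact even_ncard_supp_connectedComponentMk_sup_edge hcu hcv hne
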